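/- arXiv:1212.0822 — 3 statements merged into one kernel-verified Lean document; each statement's English description precedes it below -/
import Mathlib

section
/- Every 2×2 unitary matrix U can be written in the form U = e^{iδ} · D(α) · H · D(β) · H · D(γ) for some real numbers δ, α, β, γ, where D(θ) denotes the diagonal unitary diag(1, e^{iθ}) and H = (1/√2)·[[1,1],[1,−1]] is the Hadamard matrix. In particular, the ability to implement the gates D(θ) (i.e., Λ(e^{iθ})) together with H suffices to implement any single-qubit unitary up to global phase. -/
/-- The diagonal unitary `D(θ) = diag(1, e^{iθ})`, i.e. `Λ(e^{iθ})`. -/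
noncomputable def Dgate (θ : ℝ) : Matrix (Fin 2) (Fin 2) ℂ :=
  !![1, 0; 0, Complex.exp (θ * Complex.I)]

/-- The Hadamard matrix `H = (1/√2)·[[1,1],[1,−1]]`. -/
noncomputable def Hgate : Matrix (Fin 2) (Fin 2) ℂ :=
  ((1 / Real.sqrt 2 : ℝ) : ℂ) • !![1, 1; 1, -1]

/-!
Conjugating `D(2t)` by `H` gives `e^{it} · xRotation t`, where
`xRotation t = [[cos t, -i sin t], [-i sin t, cos t]]`, so it suffices to find Euler angles
`U = e^{iφ} · D(α) · xRotation t · D(γ)`. Since `U⋆ = U⁻¹ = adj U / det U`, a unitary `U` has the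
shape `[[a, b], [-w b̄, w ā]]` with `|a|² + |b|² = 1` and `|w| = 1`; take `cos t = |a|`,
`sin t = |b|` and choose `φ`, `α`, `γ` to match the phases of `a`, `b` and `w`.
-/

open Complex Matrix ComplexConjugate

theorem Real.exists_cos_sin_eq {x y : ℝ} (h : x ^ 2 + y ^ 2 = 1) :
    ∃ t : ℝ, Real.cos t = x ∧ Real.sin t = y := by
  have hz : ‖(⟨x, y⟩ : ℂ)‖ = 1 := by
    rw [← pow_eq_one_iff_of_nonneg (norm_nonneg _) two_ne_zero, Complex.sq_norm,
      Complex.normSq_mk]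
    linarith
  refine ⟨arg ⟨x, y⟩, ?_, ?_⟩
  · rw [cos_arg (by rintro h0; simp [h0] at hz), hz, div_one]
  · rw [sin_arg, hz, div_one]

theorem Complex.conj_eq_norm_mul_inv_exp_arg_mul_I (z : ℂ) :
    conj z = ‖z‖ * (exp (arg z * I))⁻¹ := by
  conv_lhs => rw [← norm_mul_exp_arg_mul_I z]
  rw [map_mul, conj_ofReal, ← exp_conj, map_mul, conj_ofReal, conj_I, mul_neg, Complex.exp_neg]

theorem Matrix.adjugate_eq_det_smul_star_of_mem_unitaryGroup {n α : Type*} [Fintype n]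
    [DecidableEq n] [CommRing α] [StarRing α] {A : Matrix n n α}
    (hA : A ∈ unitaryGroup n α) : adjugate A = A.det • star A := by
  calc adjugate A = adjugate A * (A * star A) := by rw [mem_unitaryGroup_iff.mp hA, mul_one]
    _ = A.det • star A := by rw [← Matrix.mul_assoc, adjugate_mul, smul_one_mul]

theorem Matrix.eta_fin_two_of_mem_unitaryGroup {U : Matrix (Fin 2) (Fin 2) ℂ}
    (hU : U ∈ unitaryGroup (Fin 2) ℂ) :
    U = !![U 0 0, U 0 1; -(U.det * conj (U 0 1)), U.det * conj (U 0 0)] := by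
  have hadj := adjugate_eq_det_smul_star_of_mem_unitaryGroup hU
  have h11 := congr_fun₂ hadj 0 0
  have h10 := congr_fun₂ hadj 1 0
  simp only [adjugate_fin_two, of_apply, cons_val', cons_val_zero, cons_val_one, empty_val',
    cons_val_fin_one, smul_apply, star_apply, Complex.star_def, smul_eq_mul] at h11 h10
  rw [← h11, ← h10, neg_neg]
  exact eta_fin_two U

theorem Matrix.norm_sq_add_norm_sq_of_mem_unitaryGroup_fin_two {U : Matrix (Fin 2) (Fin 2) ℂ}
    (hU : U ∈ unitaryGroup (Fin 2) ℂ) : ‖U 0 0‖ ^ 2 + ‖U 0 1‖ ^ 2 = 1 := by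
  have h := congr_fun₂ (mem_unitaryGroup_iff.mp hU) 0 0
  simp only [mul_apply, Fin.sum_univ_two, star_apply, one_apply_eq, Complex.star_def,
    mul_conj'] at h
  exact_mod_cast h

noncomputable def xRotation (t : ℝ) : Matrix (Fin 2) (Fin 2) ℂ :=
  !![cos t, -I * sin t; -I * sin t, cos t]

theorem Hgate_mul_Dgate_mul_Hgate (β : ℝ) :
    Hgate * Dgate β * Hgate = (2⁻¹ : ℂ) •
      !![1 + exp (β * I), 1 - exp (β * I); 1 - exp (β * I), 1 + exp (β * I)] := by
  have hr : ((1 / Real.sqrt 2 : ℝ) : ℂ) * ((1 / Real.sqrt 2 : ℝ) : ℂ) = 2⁻¹ := by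
    rw [← ofReal_mul, one_div, ← mul_inv, Real.mul_self_sqrt zero_le_two, ofReal_inv, ofReal_ofNat]
  rw [Hgate, Matrix.smul_mul, Matrix.mul_smul, Matrix.smul_mul, smul_smul, hr, Dgate, mul_fin_two,
    mul_fin_two]
  ring_nf

theorem Hgate_mul_Dgate_two_mul_Hgate (t : ℝ) :
    Hgate * Dgate (2 * t) * Hgate = exp (t * I) • xRotation t := by
  have hsq : exp (2 * t * I) = exp (t * I) ^ 2 := by rw [← exp_nat_mul]; ring_nf
  have hcos : exp (t * I) * cos t = 2⁻¹ * (1 + exp (2 * t * I)) := by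
    rw [hsq, cos, neg_mul, Complex.exp_neg]; field_simp; ring
  have hsin : exp (t * I) * (-I * sin t) = 2⁻¹ * (1 - exp (2 * t * I)) := by
    rw [hsq, sin, neg_mul (t : ℂ), Complex.exp_neg]; field_simp
    linear_combination (exp (t * I) ^ 2 - 1) * I_sq
  rw [Hgate_mul_Dgate_mul_Hgate, xRotation]
  push_cast
  simp only [smul_of, smul_cons, smul_eq_mul, smul_empty, hcos, hsin]

theorem Dgate_mul_xRotation_mul_Dgate (α t γ : ℝ) :
    Dgate α * xRotation t * Dgate γ =
      !![cos t, -I * sin t * exp (γ * I);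
        -I * exp (α * I) * sin t, exp (α * I) * cos t * exp (γ * I)] := by
  simp only [Dgate, xRotation, mul_fin_two]
  ring_nf

theorem exists_eq_smul_Dgate_mul_xRotation_mul_Dgate_of_norm {a b w : ℂ}
    (hab : ‖a‖ ^ 2 + ‖b‖ ^ 2 = 1) (hw : ‖w‖ = 1) :
    ∃ φ α t γ : ℝ, !![a, b; -(w * conj b), w * conj a] =
      exp (φ * I) • (Dgate α * xRotation t * Dgate γ) := by
  obtain ⟨t, hcos, hsin⟩ := Real.exists_cos_sin_eq hab
  refine ⟨arg a, arg w - arg a - arg b - Real.pi / 2, t, arg b - arg a + Real.pi / 2, ?_⟩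
  rw [Dgate_mul_xRotation_mul_Dgate, ← ofReal_cos, ← ofReal_sin, hcos, hsin,
    conj_eq_norm_mul_inv_exp_arg_mul_I a, conj_eq_norm_mul_inv_exp_arg_mul_I b]
  set u := exp (arg a * I)
  set v := exp (arg b * I)
  have ha : a = ‖a‖ * u := (norm_mul_exp_arg_mul_I a).symm
  have hb : b = ‖b‖ * v := (norm_mul_exp_arg_mul_I b).symm
  have hw' : w = exp (arg w * I) := by simpa [hw] using (norm_mul_exp_arg_mul_I w).symm
  have hγ : exp ((arg b - arg a + Real.pi / 2 : ℝ) * I) = v / u * I := by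
    push_cast; rw [add_mul, sub_mul, exp_add, exp_sub, exp_pi_div_two_mul_I]
  have hα : exp ((arg w - arg a - arg b - Real.pi / 2 : ℝ) * I) = w / u / v / I := by
    push_cast
    rw [sub_mul, sub_mul, sub_mul, exp_sub, exp_sub, exp_sub, exp_pi_div_two_mul_I, ← hw']
  rw [hγ, hα]
  have hu : u ≠ 0 := exp_ne_zero _
  have hv : v ≠ 0 := exp_ne_zero _
  simp only [smul_of, smul_cons, smul_eq_mul, smul_empty]
  refine congrArg of (vec2_eq (vec2_eq ?_ ?_) (vec2_eq ?_ ?_))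
  · linear_combination ha
  · field_simp
    linear_combination hb + ‖b‖ * v * I_sq
  · field_simp
  · field_simp

theorem exists_eq_smul_Dgate_mul_xRotation_mul_Dgate {U : Matrix (Fin 2) (Fin 2) ℂ}
    (hU : U ∈ unitaryGroup (Fin 2) ℂ) :
    ∃ φ α t γ : ℝ, U = exp (φ * I) • (Dgate α * xRotation t * Dgate γ) := by
  rw [eta_fin_two_of_mem_unitaryGroup hU]
  exact exists_eq_smul_Dgate_mul_xRotation_mul_Dgate_of_norm
    (norm_sq_add_norm_sq_of_mem_unitaryGroup_fin_two hU)
    (CStarRing.norm_of_mem_unitary (det_of_mem_unitary hU))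

/-- Every 2×2 unitary `U` can be written as `e^{iδ} · D(α) · H · D(β) · H · D(γ)`. -/
theorem unitary_decomposition (U : Matrix (Fin 2) (Fin 2) ℂ)
    (hU : U ∈ Matrix.unitaryGroup (Fin 2) ℂ) :
    ∃ δ α β γ : ℝ,
      U = Complex.exp (δ * Complex.I) • (Dgate α * Hgate * Dgate β * Hgate * Dgate γ) := by
  obtain ⟨φ, α, t, γ, hU⟩ := exists_eq_smul_Dgate_mul_xRotation_mul_Dgate hU
  refine ⟨φ - t, α, 2 * t, γ, ?_⟩
  rw [Matrix.mul_assoc (Dgate α) Hgate, Matrix.mul_assoc (Dgate α), Hgate_mul_Dgate_two_mul_Hgate,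
    Matrix.mul_smul, Matrix.smul_mul, smul_smul, ← Complex.exp_add, hU]
  congr
  push_cast
  ring
end

section
/- For every real φ with 0 ≤ φ ≤ π/2 and every natural number k, there exists a unit vector v = (v₀, v₁, v₂, v₃) ∈ ℂ⁴ such that: (1) 2^k·vⱼ is a Gaussian integer (an element of ℤ[i]) for each j; (2) v₁ = 0; and (3) ‖v − e^{iφ}·e₀‖ ≤ √5 · 2^{−k/2}, where e₀ = (1,0,0,0) and ‖·‖ is the Euclidean norm on ℂ⁴. -/
/-!
Write `e^{iφ} = c + s i` with `c, s ≥ 0` and round `N e^{iφ}` down to the Gaussian integer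
`p + q i`, `p = ⌊N c⌋`, `q = ⌊N s⌋`. Rounding towards `0` does not increase the modulus,
so by Lagrange's four-square theorem the deficit `N² - p² - q²` is a sum of four squares,
which fill the two free coordinates and make `v = (p + q i, 0, ⋯) / N` a unit vector.
For unit vectors `‖v - e^{iφ} e₀‖² = 2 - 2 Re ⟪v, e^{iφ} e₀⟫ = 2 (c (N c - p) + s (N s - q)) / N`,
and both rounding errors are below `1`, so this is at most `2 (c + s) / N ≤ 4 / N`.
-/

open Complex

lemma exists_add_four_squares_eq_of_le {m n : ℕ} (h : m ≤ n) :
    ∃ a b c d : ℕ, m + (a ^ 2 + b ^ 2 + c ^ 2 + d ^ 2) = n := by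
  obtain ⟨a, b, c, d, habcd⟩ := Nat.sum_four_squares (n - m)
  exact ⟨a, b, c, d, by omega⟩

section FloorApprox

variable (N : ℕ) {c s : ℝ}

lemma floor_sq_add_floor_sq_le (hc : 0 ≤ c) (hs : 0 ≤ s) (hcs : c ^ 2 + s ^ 2 = 1) :
    ⌊N * c⌋₊ ^ 2 + ⌊N * s⌋₊ ^ 2 ≤ N ^ 2 := by
  have hx := Nat.floor_le (mul_nonneg N.cast_nonneg hc)
  have hy := Nat.floor_le (mul_nonneg N.cast_nonneg hs)
  have : (⌊N * c⌋₊ : ℝ) ^ 2 + (⌊N * s⌋₊ : ℝ) ^ 2 ≤ (N : ℝ) ^ 2 :=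
    calc (⌊N * c⌋₊ : ℝ) ^ 2 + (⌊N * s⌋₊ : ℝ) ^ 2
        ≤ (N * c) ^ 2 + (N * s) ^ 2 := by gcongr
      _ = (N : ℝ) ^ 2 := by rw [mul_pow, mul_pow, ← mul_add, hcs, mul_one]
  exact_mod_cast this

lemma sub_floor_mul_sub_floor_mul_le (hc : 0 ≤ c) (hs : 0 ≤ s) (hcs : c ^ 2 + s ^ 2 = 1) :
    (N : ℝ) - ⌊N * c⌋₊ * c - ⌊N * s⌋₊ * s ≤ c + s := by
  have hx := Nat.lt_floor_add_one ((N : ℝ) * c)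
  have hy := Nat.lt_floor_add_one ((N : ℝ) * s)
  calc (N : ℝ) - ⌊N * c⌋₊ * c - ⌊N * s⌋₊ * s
      = c * (N * c - ⌊N * c⌋₊) + s * (N * s - ⌊N * s⌋₊) := by
        linear_combination (-N : ℝ) * hcs
    _ ≤ c * 1 + s * 1 := by gcongr <;> linarith
    _ = c + s := by ring

end FloorApprox

section ScaledGaussianVector

noncomputable def scaledGaussianVector (N p q a b c d : ℕ) : EuclideanSpace ℂ (Fin 4) :=
  (N : ℂ)⁻¹ • WithLp.toLp 2 ![p + q * I, 0, a + b * I, c + d * I]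

variable {N p q a b c d : ℕ}

lemma scaledGaussianVector_apply_one : scaledGaussianVector N p q a b c d 1 = 0 := by
  simp [scaledGaussianVector]

lemma natCast_mul_scaledGaussianVector_apply (hN : N ≠ 0) (j : Fin 4) :
    ∃ x y : ℤ, (N : ℂ) * scaledGaussianVector N p q a b c d j = x + y * I := by
  have hN' : (N : ℂ) ≠ 0 := Nat.cast_ne_zero.mpr hN
  simp only [scaledGaussianVector, PiLp.smul_apply, smul_eq_mul, mul_inv_cancel_left₀ hN']
  fin_cases j
  · exact ⟨p, q, by simp⟩
  · exact ⟨0, 0, by simp⟩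
  · exact ⟨a, b, by simp⟩
  · exact ⟨c, d, by simp⟩

lemma norm_scaledGaussianVector (hN : N ≠ 0)
    (h : p ^ 2 + q ^ 2 + (a ^ 2 + b ^ 2 + c ^ 2 + d ^ 2) = N ^ 2) :
    ‖scaledGaussianVector N p q a b c d‖ = 1 := by
  have hR : ((p : ℝ) ^ 2 + q ^ 2 + (a ^ 2 + b ^ 2 + c ^ 2 + d ^ 2)) = (N : ℝ) ^ 2 := by
    exact_mod_cast h
  have hw : ‖(WithLp.toLp 2 ![p + q * I, 0, a + b * I, c + d * I] :
      EuclideanSpace ℂ (Fin 4))‖ = N := by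
    rw [EuclideanSpace.norm_eq, Fin.sum_univ_four,
      Real.sqrt_eq_iff_eq_sq (by positivity) (by positivity)]
    simp [Complex.sq_norm, normSq_apply]
    linear_combination hR
  rw [scaledGaussianVector, norm_smul, norm_inv, Complex.norm_natCast, hw,
    inv_mul_cancel₀ (Nat.cast_ne_zero.mpr hN)]

lemma re_inner_scaledGaussianVector_smul_single (z : ℂ) :
    RCLike.re (inner ℂ (scaledGaussianVector N p q a b c d) (z • EuclideanSpace.single 0 1)) =
      (p * z.re + q * z.im) / N := by
  simp [scaledGaussianVector, EuclideanSpace.inner_single_right]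
  ring

end ScaledGaussianVector

theorem exists_scaledGaussianVector_near {N : ℕ} (hN : N ≠ 0) {z : ℂ} (hz : ‖z‖ = 1)
    (hre : 0 ≤ z.re) (him : 0 ≤ z.im) :
    ∃ v : EuclideanSpace ℂ (Fin 4), ‖v‖ = 1 ∧ (∀ j, ∃ x y : ℤ, (N : ℂ) * v j = x + y * I) ∧
      v 1 = 0 ∧ ‖v - z • EuclideanSpace.single 0 1‖ ^ 2 ≤ 2 * (z.re + z.im) / N := by
  have hcs : z.re ^ 2 + z.im ^ 2 = 1 := by
    have h := sq_norm_sub_sq_re z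
    rw [hz, one_pow] at h
    linarith
  obtain ⟨a, b, c, d, habcd⟩ :=
    exists_add_four_squares_eq_of_le (floor_sq_add_floor_sq_le N hre him hcs)
  set v := scaledGaussianVector N ⌊N * z.re⌋₊ ⌊N * z.im⌋₊ a b c d
  have hv : ‖v‖ = 1 := norm_scaledGaussianVector hN habcd
  refine ⟨v, hv, natCast_mul_scaledGaussianVector_apply hN, scaledGaussianVector_apply_one,
    ?_⟩
  rw [norm_sub_sq (𝕜 := ℂ), hv, norm_smul, PiLp.norm_single, norm_one, mul_one, hz,
    re_inner_scaledGaussianVector_smul_single]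
  calc (1 : ℝ) ^ 2 - 2 * ((⌊N * z.re⌋₊ * z.re + ⌊N * z.im⌋₊ * z.im) / N) + 1 ^ 2
      = 2 * (N - ⌊N * z.re⌋₊ * z.re - ⌊N * z.im⌋₊ * z.im) / N := by
        field_simp [Nat.cast_ne_zero.mpr hN]
        ring
    _ ≤ 2 * (z.re + z.im) / N := by
      gcongr
      exact sub_floor_mul_sub_floor_mul_le N hre him hcs

lemma sqrt_five_mul_two_rpow_neg_half (k : ℕ) :
    Real.sqrt 5 * (2 : ℝ) ^ (-(k : ℝ) / 2) = Real.sqrt (5 / 2 ^ k) := by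
  rw [Real.sqrt_div' _ (by positivity), div_eq_mul_inv (Real.sqrt 5), ← Real.sqrt_inv,
    ← Real.rpow_natCast, ← Real.rpow_neg zero_le_two, Real.sqrt_eq_rpow (2 ^ _),
    ← Real.rpow_mul zero_le_two]
  ring_nf

/-- For `0 ≤ φ ≤ π/2` and `k : ℕ`, there is a unit vector `v ∈ ℂ⁴` whose entries, scaled by
`2^k`, are Gaussian integers, whose second entry vanishes, and with
`‖v − e^{iφ}·e₀‖ ≤ √5 · 2^{−k/2}`. -/
theorem exists_good_approx_vector (φ : ℝ) (k : ℕ) (h0 : 0 ≤ φ) (h1 : φ ≤ Real.pi / 2) :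
    ∃ v : EuclideanSpace ℂ (Fin 4),
      ‖v‖ = 1 ∧
      (∀ j : Fin 4, ∃ a b : ℤ, (2 : ℂ) ^ k * v j = (a : ℂ) + (b : ℂ) * Complex.I) ∧
      v 1 = 0 ∧
      ‖v - Complex.exp (φ * Complex.I) • EuclideanSpace.single (0 : Fin 4) (1 : ℂ)‖
        ≤ Real.sqrt 5 * (2 : ℝ) ^ (-(k : ℝ) / 2) := by
  have hcos : 0 ≤ Real.cos φ := Real.cos_nonneg_of_mem_Icc ⟨by linarith [Real.pi_pos], h1⟩
  have hsin : 0 ≤ Real.sin φ := Real.sin_nonneg_of_nonneg_of_le_pi h0 (by linarith)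
  obtain ⟨v, hv, hgauss, hv1, hdist⟩ := exists_scaledGaussianVector_near (N := 2 ^ k)
    (pow_ne_zero k two_ne_zero) (norm_exp_ofReal_mul_I φ)
    (by rwa [exp_ofReal_mul_I_re]) (by rwa [exp_ofReal_mul_I_im])
  refine ⟨v, hv, fun j => by exact_mod_cast hgauss j, hv1, ?_⟩
  rw [exp_ofReal_mul_I_re, exp_ofReal_mul_I_im] at hdist
  rw [sqrt_five_mul_two_rpow_neg_half]
  refine Real.le_sqrt_of_sq_le ?_
  calc _ ≤ 2 * (Real.cos φ + Real.sin φ) / ((2 ^ k : ℕ) : ℝ) := hdist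
    _ ≤ 5 / 2 ^ k := by
      push_cast
      gcongr
      linarith [Real.cos_le_one φ, Real.sin_le_one φ]
end

section
/- Let n, m be natural numbers, N = 2^n, and let μ be the Haar (probability or invariant) measure on the unitary group U(N). For V ∈ U(N) define M_V = { W ∈ U(2^{m+n}) : W(|0⟩ ⊗ |φ⟩) = |0⟩ ⊗ V|φ⟩ for all |φ⟩ ∈ ℂ^N }, and for U ∈ U(2^{m+n}) and ε > 0 define the volume v(U, ε) = μ{ V ∈ U(N) : ρ(M_V, U) ≤ ε }, where ρ(M_V, U) = inf_{W ∈ M_V} ‖U − W‖_F. Then for every U ∈ U(2^{m+n}) and ε > 0, v(U, ε) ≤ μ{ V ∈ U(N) : ‖I − V‖_F < 2ε }. -/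
open MeasureTheory Matrix

/-- The (Borel) product measurable structure on complex matrices. -/
noncomputable instance matrixMeasurableSpace {I J : Type*} : MeasurableSpace (Matrix I J ℂ) :=
  MeasurableSpace.pi

/-- The Frobenius norm `‖A‖_F = √(Σ_{i,j} |A_{ij}|²)` of a complex matrix. -/
noncomputable def frobNorm {I J : Type*} [Fintype I] [Fintype J] (A : Matrix I J ℂ) : ℝ :=
  Real.sqrt (∑ i, ∑ j, ‖A i j‖ ^ 2)

/-- The embedding `|φ⟩ ↦ |0⟩ ⊗ |φ⟩` of `ℂ^(2^n)` into `ℂ^(2^m) ⊗ ℂ^(2^n)`. -/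
def withAncilla (m n : ℕ) (ψ : Fin (2 ^ n) → ℂ) : Fin (2 ^ m) × Fin (2 ^ n) → ℂ :=
  fun p => if p.1 = ⟨0, Nat.two_pow_pos m⟩ then ψ p.2 else 0

/-- `M_V`: the set of unitaries on `m + n` qubits that simulate the `n`-qubit unitary `V` using
`m` ancillary qubits initialized to `|0⟩`. -/
def simSet (n m : ℕ) (V : Matrix.unitaryGroup (Fin (2 ^ n)) ℂ) :
    Set (Matrix (Fin (2 ^ m) × Fin (2 ^ n)) (Fin (2 ^ m) × Fin (2 ^ n)) ℂ) :=
  {W | W ∈ Matrix.unitaryGroup (Fin (2 ^ m) × Fin (2 ^ n)) ℂ ∧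
    ∀ ψ : Fin (2 ^ n) → ℂ, W *ᵥ withAncilla m n ψ = withAncilla m n ((V : Matrix _ _ ℂ) *ᵥ ψ)}

/-- `ρ(M_V, U) = inf_{W ∈ M_V} ‖U − W‖_F`. -/
noncomputable def rhoSim (n m : ℕ) (V : Matrix.unitaryGroup (Fin (2 ^ n)) ℂ)
    (U : Matrix (Fin (2 ^ m) × Fin (2 ^ n)) (Fin (2 ^ m) × Fin (2 ^ n)) ℂ) : ℝ :=
  sInf {d : ℝ | ∃ W ∈ simSet n m V, d = frobNorm (U - W)}

/-!
Fix `V₀` with `ρ(M_{V₀}, U) ≤ ε`. For any other such `V` and any `c > ε` pick simulators `W₀`, `W`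
of `V₀`, `V` within `c` of `U`. Restricting to the ancilla-`|0⟩` block gives
`‖V₀ - V‖_F ≤ ‖W₀ - W‖_F`, and `U`, `W₀`, `W` all lie on the Frobenius sphere of radius
`r = √(2^(m+n))`. For two points of a sphere within `c` of a third point of it, the parallelogram
law gives `16 r² X² + X⁴ ≤ 64 r² c²` for their distance `X`; the quartic term survives the limit
`c → ε` and makes `‖V₀ - V‖_F < 2ε` strict. So the set in question lies in the left translate
of `{V : ‖1 - V‖_F < 2ε}` by `V₀`, which has the same measure since `μ` is left invariant and
`‖·‖_F` is unitarily invariant.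
-/

open Filter Topology
open scoped Kronecker

instance Matrix.borelSpace {ι κ : Type*} [Countable ι] [Countable κ] :
    BorelSpace (Matrix ι κ ℂ) :=
  inferInstanceAs (BorelSpace (ι → κ → ℂ))

theorem norm_sub_bound_of_norm_eq {𝕜 E : Type*} [RCLike 𝕜] [NormedAddCommGroup E]
    [InnerProductSpace 𝕜 E] {u w w' : E} {r c : ℝ} (hu : ‖u‖ = r) (hw : ‖w‖ = r)
    (hw' : ‖w'‖ = r) (hc : ‖u - w‖ ≤ c) (hc' : ‖u - w'‖ ≤ c) :
    16 * r ^ 2 * ‖w - w'‖ ^ 2 + ‖w - w'‖ ^ 4 ≤ 64 * r ^ 2 * c ^ 2 := by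
  set X := ‖w - w'‖
  set s := ‖w + w'‖
  have hr : 0 ≤ r := hu ▸ norm_nonneg u
  have hsX : s ^ 2 + X ^ 2 = 4 * r ^ 2 := by
    have := parallelogram_law_with_norm 𝕜 w w'
    rw [hw, hw'] at this
    linarith
  have hs : s ≤ 2 * r := (norm_add_le w w').trans (by rw [hw, hw']; linarith)
  have hmid : 2 * r - s ≤ ‖(u - w) + (u - w')‖ := by
    have huu : ‖u + u‖ = 2 * r := by rw [← two_smul 𝕜 u, norm_smul, hu]; simp
    have := norm_sub_norm_le (u + u) (w + w')
    rwa [huu, show u + u - (w + w') = (u - w) + (u - w') by abel] at this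
  have hpar := parallelogram_law_with_norm 𝕜 (u - w) (u - w')
  rw [show u - w - (u - w') = -(w - w') by abel, norm_neg] at hpar
  have hsum : X ^ 2 + (2 * r - s) ^ 2 ≤ 4 * c ^ 2 := by
    have hc0 : 0 ≤ c := (norm_nonneg _).trans hc
    nlinarith [norm_nonneg (u - w), norm_nonneg (u - w'), pow_le_pow_left₀ (by linarith) hmid 2]
  -- `X² = (2r - s)(2r + s) ≤ 4r(2r - s)`
  have hX4 : X ^ 4 ≤ 16 * r ^ 2 * (2 * r - s) ^ 2 := by
    have : X ^ 2 ≤ 4 * r * (2 * r - s) := by nlinarith [norm_nonneg (w + w')]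
    nlinarith [pow_le_pow_left₀ (sq_nonneg X) this 2]
  nlinarith [mul_le_mul_of_nonneg_left hsum (by positivity : (0 : ℝ) ≤ 16 * r ^ 2)]

theorem Fintype.sum_comp_le_of_injective {α β : Type*} [Fintype α] [Fintype β] {e : α → β}
    (he : e.Injective) {F : β → ℝ} (hF : ∀ b, 0 ≤ F b) : ∑ a, F (e a) ≤ ∑ b, F b :=
  (Finset.sum_map _ ⟨e, he⟩ F).symm.trans_le (Finset.sum_le_univ_sum_of_nonneg hF)

section Frobenius

variable {ι κ : Type*} [Fintype ι] [Fintype κ]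

theorem frobNorm_nonneg (A : Matrix ι κ ℂ) : 0 ≤ frobNorm A := Real.sqrt_nonneg _

theorem norm_toLp_vec (A : Matrix ι κ ℂ) :
    ‖(WithLp.toLp 2 A.vec : EuclideanSpace ℂ (κ × ι))‖ = frobNorm A := by
  rw [EuclideanSpace.norm_eq, Fintype.sum_prod_type_right, frobNorm]
  rfl

theorem frobNorm_sub_eq_norm_sub (A B : Matrix ι κ ℂ) :
    frobNorm (A - B) =
      ‖(WithLp.toLp 2 A.vec - WithLp.toLp 2 B.vec : EuclideanSpace ℂ (κ × ι))‖ := by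
  rw [← WithLp.toLp_sub, ← vec_sub, norm_toLp_vec]

theorem frobNorm_sq (A : Matrix ι κ ℂ) : frobNorm A ^ 2 = ((Aᴴ * A).trace).re := by
  rw [← norm_toLp_vec, ← star_vec_dotProduct_vec, dotProduct_comm,
    ← EuclideanSpace.inner_eq_star_dotProduct, ← inner_self_eq_norm_sq (𝕜 := ℂ)]
  rfl

theorem frobNorm_eq_sqrt_re_trace (A : Matrix ι κ ℂ) :
    frobNorm A = Real.sqrt ((Aᴴ * A).trace).re := by
  rw [← frobNorm_sq, Real.sqrt_sq (frobNorm_nonneg A)]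

theorem frobNorm_submatrix_le {ι' κ' : Type*} [Fintype ι'] [Fintype κ'] (A : Matrix ι κ ℂ)
    {f : ι' → ι} {g : κ' → κ} (hf : f.Injective) (hg : g.Injective) :
    frobNorm (A.submatrix f g) ≤ frobNorm A := by
  unfold frobNorm
  apply Real.sqrt_le_sqrt
  calc ∑ i, ∑ j, ‖A (f i) (g j)‖ ^ 2
      ≤ ∑ i, ∑ j, ‖A (f i) j‖ ^ 2 := by
        gcongr with i
        exact Fintype.sum_comp_le_of_injective hg (F := fun j => ‖A (f i) j‖ ^ 2) fun _ => by
          positivity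
    _ ≤ ∑ i, ∑ j, ‖A i j‖ ^ 2 :=
        Fintype.sum_comp_le_of_injective hf (F := fun i => ∑ j, ‖A i j‖ ^ 2) fun _ =>
          Finset.sum_nonneg fun _ _ => by positivity

variable [DecidableEq ι]

theorem frobNorm_of_mem_unitaryGroup {A : Matrix ι ι ℂ} (hA : A ∈ unitaryGroup ι ℂ) :
    frobNorm A = Real.sqrt (Fintype.card ι) := by
  rw [frobNorm_eq_sqrt_re_trace, ← star_eq_conjTranspose, mem_unitaryGroup_iff'.mp hA,
    trace_one]
  simp

theorem frobNorm_sub_bound_of_mem_unitaryGroup {U W W' : Matrix ι ι ℂ}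
    (hU : U ∈ unitaryGroup ι ℂ) (hW : W ∈ unitaryGroup ι ℂ) (hW' : W' ∈ unitaryGroup ι ℂ) {c : ℝ}
    (hc : frobNorm (U - W) ≤ c) (hc' : frobNorm (U - W') ≤ c) :
    16 * frobNorm U ^ 2 * frobNorm (W - W') ^ 2 + frobNorm (W - W') ^ 4 ≤
      64 * frobNorm U ^ 2 * c ^ 2 := by
  have hsphere {A : Matrix ι ι ℂ} (hA : A ∈ unitaryGroup ι ℂ) :
      ‖(WithLp.toLp 2 A.vec : EuclideanSpace ℂ (ι × ι))‖ = frobNorm U := by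
    rw [norm_toLp_vec, frobNorm_of_mem_unitaryGroup hA, frobNorm_of_mem_unitaryGroup hU]
  rw [frobNorm_sub_eq_norm_sub] at hc hc' ⊢
  exact norm_sub_bound_of_norm_eq (𝕜 := ℂ) (norm_toLp_vec U) (hsphere hW) (hsphere hW') hc hc'

theorem frobNorm_mul_of_mem_unitaryGroup {A : Matrix ι ι ℂ} (hA : A ∈ unitaryGroup ι ℂ)
    (B : Matrix ι κ ℂ) : frobNorm (A * B) = frobNorm B := by
  rw [frobNorm_eq_sqrt_re_trace, frobNorm_eq_sqrt_re_trace, conjTranspose_mul, Matrix.mul_assoc,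
    ← Matrix.mul_assoc Aᴴ, ← star_eq_conjTranspose, mem_unitaryGroup_iff'.mp hA,
    Matrix.one_mul]

theorem frobNorm_one_sub_inv_mul (V₀ V : unitaryGroup ι ℂ) :
    frobNorm (1 - ((V₀⁻¹ * V : unitaryGroup ι ℂ) : Matrix ι ι ℂ)) =
      frobNorm ((V₀ : Matrix ι ι ℂ) - (V : Matrix ι ι ℂ)) := by
  have h : (1 : Matrix ι ι ℂ) - ((V₀⁻¹ * V : unitaryGroup ι ℂ) : Matrix ι ι ℂ) =
      (V₀⁻¹ : unitaryGroup ι ℂ) * ((V₀ : Matrix ι ι ℂ) - V) := by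
    rw [Matrix.mul_sub, ← UnitaryGroup.mul_val, inv_mul_cancel, UnitaryGroup.one_val,
      UnitaryGroup.mul_val]
  rw [h, frobNorm_mul_of_mem_unitaryGroup V₀⁻¹.2]

end Frobenius

theorem withAncilla_single (m n : ℕ) (j : Fin (2 ^ n)) :
    withAncilla m n (Pi.single j 1) = Pi.single (⟨0, Nat.two_pow_pos m⟩, j) 1 := by
  ext ⟨a, b⟩
  simp only [withAncilla, Pi.single_apply, Prod.mk.injEq]
  split_ifs <;> simp_all

theorem one_kronecker_mulVec_withAncilla (m n : ℕ) (V : Matrix (Fin (2 ^ n)) (Fin (2 ^ n)) ℂ)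
    (ψ : Fin (2 ^ n) → ℂ) :
    ((1 : Matrix (Fin (2 ^ m)) (Fin (2 ^ m)) ℂ) ⊗ₖ V) *ᵥ withAncilla m n ψ
      = withAncilla m n (V *ᵥ ψ) := by
  ext ⟨a, i⟩
  by_cases ha : a = 0 <;>
    simp [mulVec, dotProduct, Fintype.sum_prod_type, one_apply, withAncilla, ha]

theorem one_kronecker_mem_simSet (n m : ℕ) (V : unitaryGroup (Fin (2 ^ n)) ℂ) :
    (1 : Matrix (Fin (2 ^ m)) (Fin (2 ^ m)) ℂ) ⊗ₖ (V : Matrix (Fin (2 ^ n)) (Fin (2 ^ n)) ℂ)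
      ∈ simSet n m V :=
  ⟨kronecker_mem_unitary (one_mem _) V.2, one_kronecker_mulVec_withAncilla m n V⟩

theorem submatrix_of_mem_simSet {n m : ℕ} {V : unitaryGroup (Fin (2 ^ n)) ℂ}
    {W : Matrix (Fin (2 ^ m) × Fin (2 ^ n)) (Fin (2 ^ m) × Fin (2 ^ n)) ℂ}
    (hW : W ∈ simSet n m V) :
    W.submatrix (Prod.mk ⟨0, Nat.two_pow_pos m⟩) (Prod.mk ⟨0, Nat.two_pow_pos m⟩) = V := by
  ext i j
  have h := congrFun (hW.2 (Pi.single j 1)) (⟨0, Nat.two_pow_pos m⟩, i)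
  simpa [withAncilla_single, withAncilla] using h

theorem frobNorm_sub_le_of_mem_simSet {n m : ℕ} {V V' : unitaryGroup (Fin (2 ^ n)) ℂ}
    {W W' : Matrix (Fin (2 ^ m) × Fin (2 ^ n)) (Fin (2 ^ m) × Fin (2 ^ n)) ℂ}
    (hW : W ∈ simSet n m V) (hW' : W' ∈ simSet n m V') :
    frobNorm ((V : Matrix (Fin (2 ^ n)) (Fin (2 ^ n)) ℂ) - (V' : Matrix _ _ ℂ)) ≤
      frobNorm (W - W') := by
  rw [← submatrix_of_mem_simSet hW, ← submatrix_of_mem_simSet hW']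
  exact frobNorm_submatrix_le (W - W') (Prod.mk_right_injective _) (Prod.mk_right_injective _)

theorem exists_mem_simSet_frobNorm_lt {n m : ℕ} {V : unitaryGroup (Fin (2 ^ n)) ℂ}
    {U : Matrix (Fin (2 ^ m) × Fin (2 ^ n)) (Fin (2 ^ m) × Fin (2 ^ n)) ℂ} {ε c : ℝ}
    (hV : rhoSim n m V U ≤ ε) (hc : ε < c) :
    ∃ W ∈ simSet n m V, frobNorm (U - W) < c := by
  have hne : {d : ℝ | ∃ W ∈ simSet n m V, d = frobNorm (U - W)}.Nonempty :=
    ⟨_, _, one_kronecker_mem_simSet n m V, rfl⟩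
  obtain ⟨_, ⟨W, hW, rfl⟩, hlt⟩ := exists_lt_of_csInf_lt hne (hV.trans_lt hc)
  exact ⟨W, hW, hlt⟩

theorem frobNorm_sub_lt_of_rhoSim_le {n m : ℕ}
    {U : Matrix (Fin (2 ^ m) × Fin (2 ^ n)) (Fin (2 ^ m) × Fin (2 ^ n)) ℂ}
    (hU : U ∈ unitaryGroup (Fin (2 ^ m) × Fin (2 ^ n)) ℂ) {ε : ℝ} (hε : 0 < ε)
    {V₀ V : unitaryGroup (Fin (2 ^ n)) ℂ} (hV₀ : rhoSim n m V₀ U ≤ ε)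
    (hV : rhoSim n m V U ≤ ε) :
    frobNorm ((V₀ : Matrix (Fin (2 ^ n)) (Fin (2 ^ n)) ℂ) - (V : Matrix _ _ ℂ)) < 2 * ε := by
  set r := frobNorm U
  set Y := frobNorm ((V₀ : Matrix (Fin (2 ^ n)) (Fin (2 ^ n)) ℂ) - (V : Matrix _ _ ℂ))
  have hbound : ∀ c, ε < c → 16 * r ^ 2 * Y ^ 2 + Y ^ 4 ≤ 64 * r ^ 2 * c ^ 2 := by
    intro c hc
    obtain ⟨W₀, hW₀, hUW₀⟩ := exists_mem_simSet_frobNorm_lt hV₀ hc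
    obtain ⟨W, hW, hUW⟩ := exists_mem_simSet_frobNorm_lt hV hc
    have hchord := frobNorm_sub_bound_of_mem_unitaryGroup hU hW₀.1 hW.1 hUW₀.le hUW.le
    have hY : Y ≤ frobNorm (W₀ - W) := frobNorm_sub_le_of_mem_simSet hW₀ hW
    have hY0 : 0 ≤ Y := frobNorm_nonneg _
    calc 16 * r ^ 2 * Y ^ 2 + Y ^ 4
        ≤ 16 * r ^ 2 * frobNorm (W₀ - W) ^ 2 + frobNorm (W₀ - W) ^ 4 := by gcongr
      _ ≤ 64 * r ^ 2 * c ^ 2 := hchord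
  have hcont : Tendsto (fun c : ℝ => 64 * r ^ 2 * c ^ 2) (𝓝[>] ε) (𝓝 (64 * r ^ 2 * ε ^ 2)) :=
    ((continuous_const.mul (continuous_pow 2)).tendsto ε).mono_left nhdsWithin_le_nhds
  have hlim : 16 * r ^ 2 * Y ^ 2 + Y ^ 4 ≤ 64 * r ^ 2 * ε ^ 2 :=
    ge_of_tendsto hcont (eventually_nhdsWithin_of_forall hbound)
  by_contra! h2ε
  have hYpos : 0 < Y := by linarith
  nlinarith [pow_pos hYpos 4, mul_le_mul_of_nonneg_left (pow_le_pow_left₀ (by linarith) h2ε 2)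
    (sq_nonneg r)]

/-- For an invariant (Haar) measure `μ` on `U(2^n)`, the volume
`v(U, ε) = μ{V : ρ(M_V, U) ≤ ε}` is at most `μ{V : ‖I − V‖_F < 2ε}`. -/
theorem volume_le_ball_volume (n m : ℕ)
    (μ : Measure (Matrix.unitaryGroup (Fin (2 ^ n)) ℂ)) [μ.IsMulLeftInvariant]
    (U : Matrix (Fin (2 ^ m) × Fin (2 ^ n)) (Fin (2 ^ m) × Fin (2 ^ n)) ℂ)
    (hU : U ∈ Matrix.unitaryGroup (Fin (2 ^ m) × Fin (2 ^ n)) ℂ)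
    (ε : ℝ) (hε : 0 < ε) :
    μ {V : Matrix.unitaryGroup (Fin (2 ^ n)) ℂ | rhoSim n m V U ≤ ε}
      ≤ μ {V : Matrix.unitaryGroup (Fin (2 ^ n)) ℂ |
            frobNorm (1 - (V : Matrix (Fin (2 ^ n)) (Fin (2 ^ n)) ℂ)) < 2 * ε} := by
  rcases Set.eq_empty_or_nonempty {V | rhoSim n m V U ≤ ε} with hempty | ⟨V₀, hV₀⟩
  · simp [hempty]
  refine (measure_mono fun V (hV : rhoSim n m V U ≤ ε) => ?_).trans_eq
    (measure_preimage_mul μ V₀⁻¹ _)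
  simpa only [Set.mem_preimage, Set.mem_ofPred_eq, frobNorm_one_sub_inv_mul]
    using frobNorm_sub_lt_of_rhoSim_le hU hε hV₀ hV
end
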